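/- arXiv:2007.10959 — 6 statements merged into one kernel-verified Lean document; each statement's English description precedes it below -/
import Mathlib

section
/- If a, b are real numbers with a² + b² > 0, then the 4×4 matrix L₄ = [[3b, √3 a, 0, 0], [√3 a, b, 2a, 0], [0, 2a, −b, √3 a], [0, 0, √3 a, −3b]] has four distinct real eigenvalues, namely ±√(a² + b²) and ±3√(a² + b²). -/
/-!
`L₄ = 2 (a J_x + b J_z)` for the spin-3/2 matrices `J_x, J_z`, so it is unitarily equivalent to
`2 √(a² + b²) J_z`, whose spectrum is `√(a² + b²) · {±1, ±3}`. Concretely, cofactor expansion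
gives the characteristic polynomial `(z² - (a² + b²)) (z² - 9 (a² + b²))`.
-/

open Matrix

noncomputable def spinThreeHalvesMatrix (a b : ℝ) : Matrix (Fin 4) (Fin 4) ℝ :=
  !![3 * b, √3 * a, 0, 0;
     √3 * a, b, 2 * a, 0;
     0, 2 * a, -b, √3 * a;
     0, 0, √3 * a, -(3 * b)]

theorem det_smul_one_sub_spinThreeHalvesMatrix (a b z : ℝ) :
    det (z • (1 : Matrix (Fin 4) (Fin 4) ℝ) - spinThreeHalvesMatrix a b) =
      (z ^ 2 - (a ^ 2 + b ^ 2)) * (z ^ 2 - 9 * (a ^ 2 + b ^ 2)) := by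
  have h3 : √3 ^ 2 = 3 := Real.sq_sqrt (by norm_num)
  simp [spinThreeHalvesMatrix, det_succ_row_zero, Fin.sum_univ_succ, Fin.succAbove, one_apply]
  linear_combination
    (-(a ^ 2) * ((z - 3 * b) * (z - b) + (z + b) * (z + 3 * b)) + (√3 ^ 2 + 3) * a ^ 4) * h3

theorem sq_sub_sq_mul_sq_sub_nine_mul_sq_eq_zero_iff {R : Type*} [CommRing R] [NoZeroDivisors R]
    (s z : R) :
    (z ^ 2 - s ^ 2) * (z ^ 2 - 9 * s ^ 2) = 0 ↔ z = s ∨ z = -s ∨ z = 3 * s ∨ z = -(3 * s) := by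
  rw [mul_eq_zero, sub_eq_zero, sub_eq_zero, show 9 * s ^ 2 = (3 * s) ^ 2 by ring,
    sq_eq_sq_iff_eq_or_eq_neg, sq_eq_sq_iff_eq_or_eq_neg, or_assoc]

theorem pairwise_ne_neg_three_mul_of_ne_zero {K : Type*} [Field K] [CharZero K] {s : K}
    (hs : s ≠ 0) : [s, -s, 3 * s, -(3 * s)].Pairwise (· ≠ ·) := by
  simp only [List.pairwise_cons, List.mem_cons, List.not_mem_nil, or_false, forall_eq_or_imp,
    forall_eq, List.Pairwise.nil]
  grind

/-- for real `a, b` with `a² + b² > 0`, the real symmetric matrix `L₄`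
has four distinct real eigenvalues `±√(a²+b²)`, `±3√(a²+b²)`. -/
theorem stmt3 (a b : ℝ) (hab : a ^ 2 + b ^ 2 > 0)
    (L₄ : Matrix (Fin 4) (Fin 4) ℝ)
    (hL : L₄ = !![3 * b, Real.sqrt 3 * a, 0, 0;
                  Real.sqrt 3 * a, b, 2 * a, 0;
                  0, 2 * a, -b, Real.sqrt 3 * a;
                  0, 0, Real.sqrt 3 * a, -(3 * b)]) :
    ∀ s : ℝ, s = Real.sqrt (a ^ 2 + b ^ 2) →
      ([s, -s, 3 * s, -(3 * s)] : List ℝ).Pairwise (· ≠ ·) ∧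
      (∀ z : ℝ, Matrix.det (z • (1 : Matrix (Fin 4) (Fin 4) ℝ) - L₄) = 0 ↔
        z = s ∨ z = -s ∨ z = 3 * s ∨ z = -(3 * s)) := by
  intro s hs
  have hs_sq : s ^ 2 = a ^ 2 + b ^ 2 := hs ▸ Real.sq_sqrt hab.le
  refine ⟨pairwise_ne_neg_three_mul_of_ne_zero (hs ▸ Real.sqrt_pos.mpr hab).ne', fun z => ?_⟩
  rw [hL, ← spinThreeHalvesMatrix, det_smul_one_sub_spinThreeHalvesMatrix, ← hs_sq,
    sq_sub_sq_mul_sq_sub_nine_mul_sq_eq_zero_iff]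
end

section
/- If a, b are real numbers with a² + b² > 0, then every eigenvalue of the matrix i·L₄ (where L₄ is the real symmetric matrix above) is purely imaginary and nonzero, and the four eigenvalues ±i√(a² + b²), ±3i√(a² + b²) are pairwise distinct. -/
/-!
`L₄ = 2 (b J_z + a J_x)` for the spin-3/2 matrices `J_x`, `J_z`; rotating the axis `(a, 0, b)` to
the `z`-axis shows that `L₄` is conjugate to `√(a² + b²) · diag(3, 1, -1, -3)`, so its
characteristic polynomial is `(w² - (a² + b²)) (w² - 9 (a² + b²))`. Hence every eigenvalue `z`
of `i L₄` satisfies `z² = -(a² + b²)` or `z² = -9 (a² + b²)`, which forces `z ∈ iℝ \ {0}`.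
-/

open Matrix Complex

/-- The matrix `L₄`, with `r` standing for `√3`. -/
def spinThreeHalves {R : Type*} [Ring R] (r a b : R) : Matrix (Fin 4) (Fin 4) R :=
  !![3 * b, r * a, 0, 0;
     r * a, b, 2 * a, 0;
     0, 2 * a, -b, r * a;
     0, 0, r * a, -(3 * b)]

theorem det_spinThreeHalves_sub_smul_one {R : Type*} [CommRing R] {r : R} (hr : r ^ 2 = 3)
    (a b w : R) :
    det (spinThreeHalves r a b - w • 1) =
      (w ^ 2 - (a ^ 2 + b ^ 2)) * (w ^ 2 - 9 * (a ^ 2 + b ^ 2)) := by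
  simp [spinThreeHalves, det_succ_row_zero, Fin.sum_univ_succ, one_apply, Fin.succAbove]
  linear_combination (a ^ 4 * (r ^ 2 + 3) - 6 * a ^ 2 * b ^ 2 - 2 * a ^ 2 * w ^ 2) * hr

theorem det_I_smul_sub_smul_one (M : Matrix (Fin 4) (Fin 4) ℂ) (z : ℂ) :
    det (I • M - z • 1) = det (M - (-I * z) • 1) := by
  have hfactor : I • M - z • 1 = I • (M - (-I * z) • 1) := by
    rw [smul_sub, smul_smul, ← mul_assoc, mul_neg, I_mul_I, neg_neg, one_mul]
  rw [hfactor, det_smul, Fintype.card_fin, I_pow_four, one_mul]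

theorem det_I_smul_spinThreeHalves_sub_smul_one {r : ℂ} (hr : r ^ 2 = 3) (a b z : ℂ) :
    det (I • spinThreeHalves r a b - z • 1) =
      (z ^ 2 + (a ^ 2 + b ^ 2)) * (z ^ 2 + 9 * (a ^ 2 + b ^ 2)) := by
  rw [det_I_smul_sub_smul_one, det_spinThreeHalves_sub_smul_one hr]
  linear_combination ((I ^ 2 - 1) * z ^ 4 - 10 * (a ^ 2 + b ^ 2) * z ^ 2) * I_sq

theorem re_eq_zero_and_ne_zero_of_sq_eq_neg {z : ℂ} {c : ℝ} (hc : 0 < c) (h : z ^ 2 = -c) :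
    z.re = 0 ∧ z ≠ 0 := by
  have him : z.re * z.im = 0 := by
    have := congrArg im h
    simp only [sq, mul_im, neg_im, ofReal_im, neg_zero] at this
    linarith
  have hre : z.re ^ 2 - z.im ^ 2 = -c := by
    simpa [sq] using congrArg re h
  refine ⟨?_, fun hz => ?_⟩
  · rcases mul_eq_zero.mp him with hre0 | him0
    · exact hre0
    · nlinarith [sq_nonneg z.re]
  · simp only [hz, zero_re, zero_im] at hre
    linarith

theorem pairwise_ne_I_mul_one_three {s : ℝ} (hs : 0 < s) :
    ([I * s, -(I * s), 3 * I * s, -(3 * I * s)] : List ℂ).Pairwise (· ≠ ·) := by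
  refine List.Pairwise.of_map (S := (· ≠ ·)) im (fun _ _ hne heq => hne (congrArg _ heq)) ?_
  have him : ([I * s, -(I * s), 3 * I * s, -(3 * I * s)] : List ℂ).map im =
      [s, -s, 3 * s, -(3 * s)] := by
    simp
  rw [him]
  simp only [List.pairwise_cons, List.mem_cons, List.not_mem_nil, or_false, forall_eq_or_imp,
    forall_eq, false_implies, implies_true, List.Pairwise.nil, and_true]
  refine ⟨⟨?_, ?_, ?_⟩, ⟨?_, ?_⟩, ?_⟩ <;> intro h <;> linarith

/-- for real `a, b` with `a² + b² > 0`, every eigenvalue of `i·L₄`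
is purely imaginary and nonzero, and the four eigenvalues
`±i√(a²+b²)`, `±3i√(a²+b²)` are pairwise distinct. -/
theorem stmt4 (a b : ℝ) (hab : a ^ 2 + b ^ 2 > 0)
    (L₄ : Matrix (Fin 4) (Fin 4) ℝ)
    (hL : L₄ = !![3 * b, Real.sqrt 3 * a, 0, 0;
                  Real.sqrt 3 * a, b, 2 * a, 0;
                  0, 2 * a, -b, Real.sqrt 3 * a;
                  0, 0, Real.sqrt 3 * a, -(3 * b)]) :
    (∀ z : ℂ,
        Matrix.det (Complex.I • (L₄.map (Complex.ofReal))
          - z • (1 : Matrix (Fin 4) (Fin 4) ℂ)) = 0 → z.re = 0 ∧ z ≠ 0) ∧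
    ∀ s : ℝ, s = Real.sqrt (a ^ 2 + b ^ 2) →
      ([Complex.I * s, -(Complex.I * s), 3 * Complex.I * s,
        -(3 * Complex.I * s)] : List ℂ).Pairwise (· ≠ ·) := by
  have hmap : L₄.map ofReal = spinThreeHalves (Real.sqrt 3 : ℂ) a b := by
    subst hL
    ext i j
    fin_cases i <;> fin_cases j <;> simp [spinThreeHalves]
  have hsqrt3 : (Real.sqrt 3 : ℂ) ^ 2 = 3 := by
    norm_cast
    exact Real.sq_sqrt (by norm_num)
  refine ⟨fun z hz => ?_, fun s hs => pairwise_ne_I_mul_one_three (hs ▸ Real.sqrt_pos.2 hab)⟩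
  rw [hmap, det_I_smul_spinThreeHalves_sub_smul_one hsqrt3] at hz
  rcases mul_eq_zero.mp hz with h | h
  · exact re_eq_zero_and_ne_zero_of_sq_eq_neg hab (by push_cast; linear_combination h)
  · exact re_eq_zero_and_ne_zero_of_sq_eq_neg (c := 9 * (a ^ 2 + b ^ 2)) (by positivity)
      (by push_cast; linear_combination h)
end

section
/- For real a, the integral ∫_{−∞}^{∞} e^{iaz}/(2 cosh² z) dz equals πa/(2 sinh(πa/2)) when a ≠ 0, and equals 1 when a = 0. -/
open Complex MeasureTheory

/-!
Substitute `t = sigmoid (2z)`, which maps `ℝ` onto `(0, 1)` with `dt = dz / (2 cosh² z)` and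
`t / (1 - t) = e^{2z}`. The integral becomes the Beta integral `B(1 + w, 1 - w)` with
`w = ia/2`, and `B(1 + w, 1 - w) = Γ(1 + w) Γ(1 - w) = w Γ(w) Γ(1 - w) = π w / sin (π w)`
by the reflection formula; for `w = ia/2` this is `πa / (2 sinh (πa/2))`.
-/

namespace Real

lemma sigmoid_two_mul_mul_one_sub_sigmoid_two_mul (z : ℝ) :
    sigmoid (2 * z) * (1 - sigmoid (2 * z)) = (4 * cosh z ^ 2)⁻¹ := by
  have hsq : exp (-(2 * z)) = exp (-z) ^ 2 := by rw [← exp_nat_mul]; ring_nf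
  have hsq' : exp (2 * z) = exp z ^ 2 := by rw [← exp_nat_mul]; ring_nf
  have hinv : exp z * exp (-z) = 1 := by rw [← exp_add, add_neg_cancel, exp_zero]
  rw [← sigmoid_neg, sigmoid_def, sigmoid_def, neg_neg, cosh_eq, hsq, hsq']
  field_simp
  linear_combination (-4 * (exp z * exp (-z) - 1)) * hinv

lemma log_sigmoid_sub_log_one_sub_sigmoid (x : ℝ) :
    log (sigmoid x) - log (1 - sigmoid x) = x := by
  rw [← sigmoid_neg, ← sigmoid_mul_rexp_neg, log_mul (sigmoid_pos x).ne' (exp_pos _).ne',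
    log_exp]
  ring

end Real

lemma sigmoid_cpow_mul_one_sub_sigmoid_cpow (w : ℂ) (x : ℝ) :
    (Real.sigmoid x : ℂ) ^ (1 + w) * (1 - (Real.sigmoid x : ℂ)) ^ (1 - w)
      = ((Real.sigmoid x * (1 - Real.sigmoid x) : ℝ) : ℂ) * cexp (w * x) := by
  set p := Real.sigmoid x
  have hp : 0 < p := Real.sigmoid_pos x
  have hq : 0 < 1 - p := sub_pos.mpr (Real.sigmoid_lt_one x)
  have hlog : Real.log p - Real.log (1 - p) = x := Real.log_sigmoid_sub_log_one_sub_sigmoid x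
  rw [show 1 - (p : ℂ) = ((1 - p : ℝ) : ℂ) by push_cast; rfl,
    cpow_def_of_ne_zero (ofReal_ne_zero.mpr hp.ne'),
    cpow_def_of_ne_zero (ofReal_ne_zero.mpr hq.ne'), ← ofReal_log hp.le, ← ofReal_log hq.le]
  calc cexp (Real.log p * (1 + w)) * cexp (Real.log (1 - p) * (1 - w))
      = cexp (Real.log p) * cexp (Real.log (1 - p))
          * cexp (w * ((Real.log p - Real.log (1 - p) : ℝ) : ℂ)) := by
        rw [← exp_add, ← exp_add, ← exp_add]; push_cast; ring_nf
    _ = ((p * (1 - p) : ℝ) : ℂ) * cexp (w * x) := by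
        rw [ofReal_mul, ← ofReal_exp, ← ofReal_exp, Real.exp_log hp, Real.exp_log hq, hlog]

-- No conditions on `s` and `u`: the change of variables formula needs no integrability, both
-- sides being `0` when the integrand is not integrable.
theorem integral_sigmoid_cpow_mul_one_sub_sigmoid_cpow (s u : ℂ) :
    ∫ x : ℝ, (Real.sigmoid x : ℂ) ^ s * (1 - (Real.sigmoid x : ℂ)) ^ u
      = betaIntegral s u := by
  have hcv := integral_image_eq_integral_abs_deriv_smul MeasurableSet.univ
    (fun x _ => (Real.hasDerivAt_sigmoid x).hasDerivWithinAt) Real.sigmoid_injective.injOn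
    (fun t : ℝ => (t : ℂ) ^ (s - 1) * (1 - (t : ℂ)) ^ (u - 1))
  rw [Set.image_univ, Real.range_sigmoid, setIntegral_univ] at hcv
  rw [betaIntegral, intervalIntegral.integral_of_le zero_le_one, integral_Ioc_eq_integral_Ioo,
    hcv]
  congr 1
  ext x
  have hp := Real.sigmoid_pos x
  have hq : 0 < 1 - Real.sigmoid x := sub_pos.mpr (Real.sigmoid_lt_one x)
  have hp' : (Real.sigmoid x : ℂ) ≠ 0 := ofReal_ne_zero.mpr hp.ne'
  have hq' : 1 - (Real.sigmoid x : ℂ) ≠ 0 := by exact_mod_cast hq.ne'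
  rw [abs_of_pos (mul_pos hp hq), real_smul, cpow_sub _ _ hp', cpow_sub _ _ hq', cpow_one,
    cpow_one]
  push_cast
  field_simp

theorem integral_cexp_mul_div_two_cosh_sq (w : ℂ) :
    ∫ z : ℝ, cexp (w * z) / (2 * (Real.cosh z : ℂ) ^ 2)
      = betaIntegral (1 + w / 2) (1 - w / 2) := by
  set F : ℝ → ℂ := fun y =>
    (Real.sigmoid y : ℂ) ^ (1 + w / 2) * (1 - (Real.sigmoid y : ℂ)) ^ (1 - w / 2)
  have hF : ∀ z : ℝ, cexp (w * z) / (2 * (Real.cosh z : ℂ) ^ 2) = 2 * F (2 * z) := by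
    intro z
    have hcosh : (Real.cosh z : ℂ) ≠ 0 := ofReal_ne_zero.mpr (Real.cosh_pos z).ne'
    simp only [F, sigmoid_cpow_mul_one_sub_sigmoid_cpow,
      Real.sigmoid_two_mul_mul_one_sub_sigmoid_two_mul]
    push_cast
    field_simp
    ring_nf
  rw [← integral_sigmoid_cpow_mul_one_sub_sigmoid_cpow, integral_congr_ae (.of_forall hF),
    integral_const_mul, Measure.integral_comp_mul_left F 2]
  norm_num [F]
  ring

theorem betaIntegral_one_add_one_sub {w : ℂ} (hw : w ≠ 0) (hre : |w.re| < 1) :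
    betaIntegral (1 + w) (1 - w) = Real.pi * w / sin (Real.pi * w) := by
  obtain ⟨h₁, h₂⟩ := abs_lt.mp hre
  have hΓ := Gamma_mul_Gamma_eq_betaIntegral (s := 1 + w) (t := 1 - w)
    (by simp; linarith) (by simp; linarith)
  have hΓ₂ : Gamma 2 = 1 := by simp
  rw [add_add_sub_cancel, one_add_one_eq_two, hΓ₂, one_mul] at hΓ
  rw [← hΓ, add_comm, Gamma_add_one w hw, mul_assoc, Gamma_mul_Gamma_one_sub]
  ring

/-- `∫ e^{iaz}/(2 cosh² z) dz = πa/(2 sinh(πa/2))` for `a ≠ 0`,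
and equals `1` for `a = 0`. -/
theorem stmt10 (a : ℝ) :
    (a ≠ 0 →
      ∫ z : ℝ, Complex.exp (Complex.I * a * z) / (2 * (Real.cosh z : ℂ) ^ 2)
        = ((Real.pi * a / (2 * Real.sinh (Real.pi * a / 2)) : ℝ) : ℂ)) ∧
    (a = 0 →
      ∫ z : ℝ, Complex.exp (Complex.I * a * z) / (2 * (Real.cosh z : ℂ) ^ 2)
        = 1) := by
  refine ⟨fun ha => ?_, fun ha => ?_⟩
  · have hw : I * a / 2 ≠ 0 := by simp [ha]
    have hsinh : Real.sinh (Real.pi * a / 2) ≠ 0 := by simp [ha, Real.pi_ne_zero]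
    rw [integral_cexp_mul_div_two_cosh_sq, betaIntegral_one_add_one_sub hw (by simp),
      show (Real.pi : ℂ) * (I * a / 2) = ((Real.pi * a / 2 : ℝ) : ℂ) * I by push_cast; ring,
      sin_mul_I, ← ofReal_sinh]
    push_cast
    field_simp
  · subst ha
    rw [integral_cexp_mul_div_two_cosh_sq]
    norm_num [betaIntegral_eval_one_right]
end

section
/- For real a ≠ 0 and real Δ ≠ 0, the integral K(a, Δ) = ∫_{−∞}^{∞} e^{iaz}/(2 cosh z · cosh(z + Δ)) dz equals π(1 − e^{−iaΔ})/(2i sinh Δ sinh(πa/2)). -/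
open Complex MeasureTheory Set

/-!
Since `tanh' = sech²`, `sinh Δ / (cosh z cosh (z + Δ)) = tanh (z + Δ) - tanh z` is the integral of
`sech² (z + s)` over `s ∈ [0, Δ]`. Exchanging the two integrals (Fubini) and translating `z`
factors `2 sinh Δ · K(a, Δ)` as `∫₀^Δ e^{-ias} ds = (1 - e^{-iaΔ}) / (ia)` times the Fourier
transform of `sech²`. The substitution `t = ½ log ((1 - x) / x)` turns the latter into
`2 B(1 - ia/2, 1 + ia/2) = 2 Γ(1 - ia/2) Γ(1 + ia/2)`, which the reflection formula evaluates to
`π a / sinh (π a / 2)`.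
-/

noncomputable def negHalfLogit (x : ℝ) : ℝ := (Real.log (1 - x) - Real.log x) / 2

section negHalfLogit

variable {x : ℝ}

lemma exp_two_mul_negHalfLogit (hx : x ∈ Ioo (0 : ℝ) 1) :
    Real.exp (2 * negHalfLogit x) = (1 - x) / x := by
  rw [negHalfLogit, mul_div_cancel₀ _ two_ne_zero, Real.exp_sub,
    Real.exp_log (sub_pos.2 hx.2), Real.exp_log hx.1]

lemma negHalfLogit_inv_one_add_exp (t : ℝ) : negHalfLogit (1 + Real.exp (2 * t))⁻¹ = t := by
  have hpos : 0 < 1 + Real.exp (2 * t) := by positivity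
  have hcompl : 1 - (1 + Real.exp (2 * t))⁻¹ = Real.exp (2 * t) * (1 + Real.exp (2 * t))⁻¹ := by
    field_simp; ring
  rw [negHalfLogit, hcompl, Real.log_mul (Real.exp_pos _).ne' (inv_pos.2 hpos).ne', Real.log_exp]
  ring

lemma image_negHalfLogit : negHalfLogit '' Ioo 0 1 = univ :=
  eq_univ_of_forall fun t =>
    ⟨(1 + Real.exp (2 * t))⁻¹,
      ⟨by positivity, inv_lt_one_of_one_lt₀ (lt_add_of_pos_right _ (Real.exp_pos _))⟩,
      negHalfLogit_inv_one_add_exp t⟩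

lemma injOn_negHalfLogit : InjOn negHalfLogit (Ioo 0 1) :=
  LeftInvOn.injOn (f₁' := fun t => (1 + Real.exp (2 * t))⁻¹) fun x hx => by
    have hx0 := hx.1.ne'
    simp only [exp_two_mul_negHalfLogit hx]
    field_simp
    ring

lemma hasDerivAt_negHalfLogit (hx : x ∈ Ioo (0 : ℝ) 1) :
    HasDerivAt negHalfLogit (-(2 * x * (1 - x))⁻¹) x := by
  obtain ⟨h0, h1⟩ := hx
  have h1' : 1 - x ≠ 0 := (sub_pos.2 h1).ne'
  have := (((Real.hasDerivAt_log h1').comp x ((hasDerivAt_id x).const_sub 1)).sub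
    (Real.hasDerivAt_log h0.ne')).div_const 2
  refine this.congr_deriv ?_
  field_simp
  ring

lemma cosh_negHalfLogit_sq (hx : x ∈ Ioo (0 : ℝ) 1) :
    Real.cosh (negHalfLogit x) ^ 2 = (4 * x * (1 - x))⁻¹ := by
  have h0 := hx.1.ne'
  have h1 : 1 - x ≠ 0 := (sub_pos.2 hx.2).ne'
  have hu := exp_two_mul_negHalfLogit hx
  rw [two_mul, Real.exp_add, ← sq] at hu
  rw [Real.cosh_eq, Real.exp_neg]
  have := (Real.exp_pos (negHalfLogit x)).ne'
  field_simp
  rw [hu]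
  field_simp
  ring

lemma exp_I_mul_negHalfLogit (a : ℝ) (hx : x ∈ Ioo (0 : ℝ) 1) :
    exp (I * a * negHalfLogit x) = (x : ℂ) ^ (-(I * a / 2)) * (1 - (x : ℂ)) ^ (I * a / 2) := by
  have h1 : (1 : ℝ) - x ≠ 0 := (sub_pos.2 hx.2).ne'
  rw [cpow_def_of_ne_zero (ofReal_ne_zero.2 hx.1.ne'),
    cpow_def_of_ne_zero (by exact_mod_cast h1), ← exp_add,
    ← ofReal_log hx.1.le, ← ofReal_one, ← ofReal_sub, ← ofReal_log (sub_pos.2 hx.2).le,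
    negHalfLogit]
  congr 1
  push_cast
  ring

end negHalfLogit

lemma Complex.Gamma_one_sub_mul_Gamma_one_add {s : ℂ} (hs : s ≠ 0) :
    Gamma (1 - s) * Gamma (1 + s) = Real.pi * s / sin (Real.pi * s) := by
  rw [add_comm, Gamma_add_one s hs, mul_left_comm, mul_comm (Gamma (1 - s)),
    Gamma_mul_Gamma_one_sub]
  ring

lemma Complex.betaIntegral_one_sub_one_add {s : ℂ} (hs : s ≠ 0) (hre : |s.re| < 1) :
    betaIntegral (1 - s) (1 + s) = Real.pi * s / sin (Real.pi * s) := by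
  obtain ⟨hlt, hgt⟩ := abs_lt.1 hre
  have h := Gamma_mul_Gamma_eq_betaIntegral (s := 1 - s) (t := 1 + s)
    (by rw [sub_re, one_re]; linarith) (by rw [add_re, one_re]; linarith)
  rw [show 1 - s + (1 + s) = 2 by ring, Gamma_ofNat_eq_factorial, Nat.factorial_one,
    Nat.cast_one, one_mul] at h
  rw [← h, Gamma_one_sub_mul_Gamma_one_add hs]

lemma integral_exp_mul_inv_cosh_sq_eq_betaIntegral (a : ℝ) :
    ∫ t : ℝ, exp (I * a * t) * ((Real.cosh t ^ 2)⁻¹ : ℝ) =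
      2 * betaIntegral (1 - I * a / 2) (1 + I * a / 2) := by
  have hsubst := integral_image_eq_integral_abs_deriv_smul measurableSet_Ioo
    (fun x hx => (hasDerivAt_negHalfLogit hx).hasDerivWithinAt) injOn_negHalfLogit
    (fun t : ℝ => exp (I * a * t) * ((Real.cosh t ^ 2)⁻¹ : ℝ))
  rw [image_negHalfLogit, setIntegral_univ] at hsubst
  rw [hsubst, betaIntegral, ← intervalIntegral.integral_const_mul,
    intervalIntegral.integral_of_le zero_le_one, integral_Ioc_eq_integral_Ioo]
  refine setIntegral_congr_fun measurableSet_Ioo fun x hx => ?_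
  have hx' : 0 < 2 * x * (1 - x) := mul_pos (mul_pos two_pos hx.1) (sub_pos.2 hx.2)
  rw [abs_neg, abs_of_pos (inv_pos.2 hx'), cosh_negHalfLogit_sq hx, inv_inv,
    exp_I_mul_negHalfLogit a hx, real_smul, sub_sub_cancel_left, add_sub_cancel_left]
  have h0 : (x : ℂ) ≠ 0 := ofReal_ne_zero.2 hx.1.ne'
  have h1 : 1 - (x : ℂ) ≠ 0 := by exact_mod_cast (sub_pos.2 hx.2).ne'
  push_cast
  field_simp
  ring

lemma integral_exp_mul_inv_cosh_sq {a : ℝ} (ha : a ≠ 0) :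
    ∫ t : ℝ, exp (I * a * t) * ((Real.cosh t ^ 2)⁻¹ : ℝ) =
      Real.pi * a / (Real.sinh (Real.pi * a / 2) : ℂ) := by
  have hs : I * a / 2 ≠ 0 := by simp [ha]
  have hsin : sin (Real.pi * (I * a / 2)) = Real.sinh (Real.pi * a / 2) * I := by
    rw [ofReal_sinh, ← sin_mul_I]
    congr 1
    push_cast
    ring
  have hsinh : (Real.sinh (Real.pi * a / 2) : ℂ) ≠ 0 :=
    ofReal_ne_zero.2 (Real.sinh_ne_zero.2 (by positivity))
  rw [integral_exp_mul_inv_cosh_sq_eq_betaIntegral,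
    betaIntegral_one_sub_one_add hs (by simp), hsin]
  field_simp

lemma Real.hasDerivAt_tanh (t : ℝ) : HasDerivAt tanh ((cosh t ^ 2)⁻¹) t := by
  have h := (hasDerivAt_sinh t).div (hasDerivAt_cosh t) (cosh_pos t).ne'
  rw [show sinh / cosh = tanh from funext fun x => (tanh_eq_sinh_div_cosh x).symm] at h
  refine h.congr_deriv ?_
  rw [← sq, ← sq, cosh_sq_sub_sinh_sq, one_div]

lemma Real.continuous_inv_cosh_sq : Continuous fun t : ℝ => (cosh t ^ 2)⁻¹ :=
  Continuous.inv₀ (by fun_prop) fun t => (pow_pos (cosh_pos t) 2).ne'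

lemma Real.integrable_inv_cosh_sq : Integrable fun t : ℝ => (cosh t ^ 2)⁻¹ := by
  refine integrable_inv_one_add_sq.mono' (by fun_prop) (.of_forall fun t => ?_)
  have hsq : t ^ 2 ≤ sinh t ^ 2 :=
    sq_le_sq.2 ((abs_sinh t).symm ▸ self_le_sinh_iff.2 (abs_nonneg t))
  rw [norm_inv, norm_pow, norm_of_nonneg (cosh_pos t).le, cosh_sq']
  exact inv_anti₀ (by positivity) (by linarith)

lemma Real.sinh_div_cosh_mul_cosh_add_eq_integral (z Δ : ℝ) :
    sinh Δ / (cosh z * cosh (z + Δ)) = ∫ s in (0 : ℝ)..Δ, (cosh (z + s) ^ 2)⁻¹ := by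
  have hcont := continuous_inv_cosh_sq.comp (continuous_const_add z)
  rw [intervalIntegral.integral_eq_sub_of_hasDerivAt
      (fun s _ => (hasDerivAt_tanh (z + s)).comp_const_add z s) (hcont.intervalIntegrable _ _),
    add_zero, tanh_eq_sinh_div_cosh, tanh_eq_sinh_div_cosh,
    div_sub_div _ _ (cosh_pos _).ne' (cosh_pos _).ne', ← sinh_sub, add_sub_cancel_left, mul_comm]

lemma norm_exp_I_mul_ofReal_mul (a z : ℝ) : ‖exp (I * a * z)‖ = 1 := by
  simp [norm_exp]

lemma integral_exp_mul_comp_add_right (g : ℝ → ℂ) (a s : ℝ) :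
    ∫ z : ℝ, exp (I * a * z) * g (z + s) =
      exp (-(I * a * s)) * ∫ t : ℝ, exp (I * a * t) * g t := by
  rw [← integral_sub_right_eq_self _ s, ← integral_const_mul]
  congr 1 with z
  rw [sub_add_cancel, ← mul_assoc, ← exp_add]
  congr 2
  push_cast
  ring

lemma integral_exp_mul_intervalIntegral_comp_add {g : ℝ → ℂ} (hg : Continuous g)
    (hgi : Integrable g) (a Δ : ℝ) :
    ∫ z : ℝ, exp (I * a * z) * ∫ s in (0 : ℝ)..Δ, g (z + s) =
      (∫ s in (0 : ℝ)..Δ, exp (-(I * a * s))) * ∫ t : ℝ, exp (I * a * t) * g t := by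
  have : IsFiniteMeasure (volume.restrict (uIoc 0 Δ)) := by rw [uIoc]; infer_instance
  have hint : Integrable (Function.uncurry fun s z : ℝ => exp (I * a * z) * g (z + s))
      ((volume.restrict (uIoc 0 Δ)).prod volume) := by
    refine (integrable_prod_iff (Continuous.aestronglyMeasurable (by fun_prop))).2
      ⟨.of_forall fun s => ?_, ?_⟩
    · exact (hgi.comp_add_right s).bdd_mul (by fun_prop)
        (.of_forall fun z => (norm_exp_I_mul_ofReal_mul a z).le)
    · simp only [Function.uncurry_apply_pair, norm_mul, norm_exp_I_mul_ofReal_mul, one_mul,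
        integral_add_right_eq_self fun z => ‖g z‖]
      exact integrable_const _
  calc ∫ z : ℝ, exp (I * a * z) * ∫ s in (0 : ℝ)..Δ, g (z + s)
      = ∫ z : ℝ, ∫ s in (0 : ℝ)..Δ, exp (I * a * z) * g (z + s) := by
        simp only [intervalIntegral.integral_const_mul]
    _ = ∫ s in (0 : ℝ)..Δ, ∫ z : ℝ, exp (I * a * z) * g (z + s) :=
        (intervalIntegral_integral_swap hint).symm
    _ = _ := by
        simp only [integral_exp_mul_comp_add_right, intervalIntegral.integral_mul_const]

lemma integral_exp_neg_I_mul_ofReal_mul {a : ℝ} (ha : a ≠ 0) (Δ : ℝ) :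
    ∫ s in (0 : ℝ)..Δ, exp (-(I * a * s)) = (1 - exp (-(I * a * Δ))) / (I * a) := by
  have hIa : I * a ≠ 0 := mul_ne_zero I_ne_zero (ofReal_ne_zero.2 ha)
  have h := integral_exp_mul_complex (a := 0) (b := Δ) (neg_ne_zero.2 hIa)
  simp only [neg_mul, ofReal_zero, mul_zero, exp_zero] at h
  rw [h]
  field_simp
  ring

/-- `K(a,Δ) = π(1 − e^{−iaΔ})/(2i sinh Δ sinh(πa/2))` for real
`a ≠ 0`, `Δ ≠ 0`. -/
theorem stmt11 (a Δ : ℝ) (ha : a ≠ 0) (hΔ : Δ ≠ 0) :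
    ∫ z : ℝ, Complex.exp (Complex.I * a * z)
        / (2 * (Real.cosh z : ℂ) * (Real.cosh (z + Δ) : ℂ))
      = (Real.pi : ℂ) * (1 - Complex.exp (-(Complex.I * a * Δ)))
        / (2 * Complex.I * (Real.sinh Δ : ℂ) * (Real.sinh (Real.pi * a / 2) : ℂ)) := by
  have hsinhΔ : (Real.sinh Δ : ℂ) ≠ 0 := ofReal_ne_zero.2 (Real.sinh_ne_zero.2 hΔ)
  have hsinh : (Real.sinh (Real.pi * a / 2) : ℂ) ≠ 0 :=
    ofReal_ne_zero.2 (Real.sinh_ne_zero.2 (by positivity))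
  have haC : (a : ℂ) ≠ 0 := ofReal_ne_zero.2 ha
  have hintegrand (z : ℝ) : exp (I * a * z) / (2 * (Real.cosh z : ℂ) * (Real.cosh (z + Δ) : ℂ)) =
      (2 * Real.sinh Δ : ℂ)⁻¹ *
        (exp (I * a * z) * ∫ s in (0 : ℝ)..Δ, (((Real.cosh (z + s) ^ 2)⁻¹ : ℝ) : ℂ)) := by
    rw [intervalIntegral.integral_ofReal, ← Real.sinh_div_cosh_mul_cosh_add_eq_integral,
      ofReal_div, ofReal_mul]
    field_simp
  rw [integral_congr_ae (.of_forall hintegrand), integral_const_mul,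
    integral_exp_mul_intervalIntegral_comp_add (g := fun t => ((Real.cosh t ^ 2)⁻¹ : ℝ))
      (continuous_ofReal.comp Real.continuous_inv_cosh_sq) Real.integrable_inv_cosh_sq.ofReal,
    integral_exp_neg_I_mul_ofReal_mul ha, integral_exp_mul_inv_cosh_sq ha]
  field_simp
end

section
/- Let L and A be the tridiagonal matrices of the Toda-chain Lax pair: L = Σ_s b_s E_{ss} + Σ_s a_s(E_{s,s+1} + E_{s+1,s}) and A = Σ_s a_s(E_{s,s+1} − E_{s+1,s}). If the functions a_s(t), b_s(t) satisfy the open Toda chain equations da_s/dt = a_s(b_{s+1} − b_s) and db_s/dt = 2(a_s² − a_{s−1}²) (with a₀ = a_N = 0), then dL/dt = [A, L]. -/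
/-!
Write `L = D + U + Uᵀ` and `A = U - Uᵀ`, with `D` the diagonal and `U` the superdiagonal part
of `L`. As `D` is symmetric, `[U - Uᵀ, D + U + Uᵀ] = [U, D] + [U, D]ᵀ + 2 [U, Uᵀ]`. Since `D` is
diagonal, `[U, D]` is again superdiagonal, with entries `a_s (b_{s+1} - b_s)`, and since
`a₀ = a_N = 0` the matrix `[U, Uᵀ]` is diagonal, with entries `a_s² - a_{s-1}²`. So `[A, L]` is
the tridiagonal matrix whose entries are the right-hand sides of the Toda equations, i.e. `dL/dt`.
-/

open Matrix

namespace Toda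

variable {R : Type*} (N : ℕ)

/-- Indices are shifted to match the paper: entry `(j, j + 1)` is `c (j + 1)`. -/
def supDiag [Zero R] (c : ℕ → R) : Matrix (Fin N) (Fin N) R :=
  of fun j k => if (j : ℕ) + 1 = k then c (j + 1) else 0

/-- The symmetric tridiagonal matrix with diagonal `d 1, …, d N` and off-diagonal
`c 1, …, c (N - 1)`. -/
def tridiag [AddMonoid R] (d c : ℕ → R) : Matrix (Fin N) (Fin N) R :=
  diagonal (fun j : Fin N => d ((j : ℕ) + 1)) + supDiag N c + (supDiag N c)ᵀ

variable {N}

theorem tridiag_apply [AddMonoid R] (d c : ℕ → R) (j k : Fin N) :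
    tridiag N d c j k =
      if (j : ℕ) = k then d (j + 1)
      else if (j : ℕ) + 1 = k then c (j + 1)
      else if (k : ℕ) + 1 = j then c (k + 1)
      else 0 := by
  simp only [tridiag, supDiag, Matrix.add_apply, diagonal_apply, transpose_apply, of_apply,
    Fin.ext_iff]
  split_ifs <;> first | omega | simp_all

theorem supDiag_sub_transpose_apply [AddGroup R] (c : ℕ → R) (j k : Fin N) :
    (supDiag N c - (supDiag N c)ᵀ) j k =
      if (j : ℕ) + 1 = k then c (j + 1)
      else if (k : ℕ) + 1 = j then -c (k + 1)
      else 0 := by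
  simp only [supDiag, Matrix.sub_apply, transpose_apply, of_apply]
  split_ifs <;> first | omega | simp

theorem supDiag_mul_diagonal_sub_diagonal_mul [CommRing R] (c b : ℕ → R) :
    supDiag N c * diagonal (fun j : Fin N => b ((j : ℕ) + 1)) -
        diagonal (fun j : Fin N => b ((j : ℕ) + 1)) * supDiag N c =
      supDiag N fun s => c s * (b (s + 1) - b s) := by
  ext j k
  simp only [Matrix.sub_apply, mul_diagonal, diagonal_mul, supDiag, of_apply]
  split_ifs with h
  · rw [← h]; ring
  · ring

theorem sum_ite_val_eq {M : Type*} [AddCommMonoid M] (n : ℕ) (f : Fin N → M) :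
    ∑ m : Fin N, (if n = (m : ℕ) then f m else 0) = if h : n < N then f ⟨n, h⟩ else 0 := by
  split_ifs with h
  · rw [Fintype.sum_eq_single ⟨n, h⟩ fun m hm => if_neg fun h' => hm (Fin.ext h'.symm),
      if_pos rfl]
  · exact Finset.sum_eq_zero fun m _ => if_neg fun h' : n = m => h (h' ▸ m.isLt)

theorem supDiag_mul_transpose [Semiring R] {c : ℕ → R} (hc : c N = 0) :
    supDiag N c * (supDiag N c)ᵀ = diagonal fun j : Fin N => c ((j : ℕ) + 1) ^ 2 := by
  ext j k
  simp only [mul_apply, transpose_apply, supDiag, of_apply, diagonal_apply, ite_mul, zero_mul,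
    sum_ite_val_eq]
  split_ifs <;> simp_all [Fin.ext_iff, sq]
  rw [show (k : ℕ) + 1 = N by omega, hc, zero_mul]

theorem transpose_supDiag_mul [Semiring R] {c : ℕ → R} (hc : c 0 = 0) :
    (supDiag N c)ᵀ * supDiag N c = diagonal fun j : Fin N => c j ^ 2 := by
  ext ⟨_ | j, hj⟩ k
  · simp [mul_apply, supDiag, diagonal_apply, hc]
  simp only [mul_apply, transpose_apply, supDiag, of_apply, diagonal_apply, ite_mul, zero_mul,
    Nat.add_right_cancel_iff, eq_comm (b := j), sum_ite_val_eq]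
  split_ifs <;> simp_all [Fin.ext_iff, sq]
  omega

theorem commutator_tridiag [CommRing R] {a b : ℕ → R} (ha0 : a 0 = 0) (haN : a N = 0) :
    (supDiag N a - (supDiag N a)ᵀ) * tridiag N b a -
        tridiag N b a * (supDiag N a - (supDiag N a)ᵀ) =
      tridiag N (fun s => 2 * (a s ^ 2 - a (s - 1) ^ 2)) fun s => a s * (b (s + 1) - b s) := by
  set D := diagonal fun j : Fin N => b ((j : ℕ) + 1)
  set U := supDiag N a
  have expand : (U - Uᵀ) * (D + U + Uᵀ) - (D + U + Uᵀ) * (U - Uᵀ) =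
      (U * D - D * U) + (U * D - D * U)ᵀ + 2 • (U * Uᵀ - Uᵀ * U) := by
    simp only [transpose_sub, transpose_mul, D, diagonal_transpose]
    noncomm_ring
  rw [show tridiag N b a = D + U + Uᵀ from rfl, expand, supDiag_mul_diagonal_sub_diagonal_mul,
    supDiag_mul_transpose haN, transpose_supDiag_mul ha0, diagonal_sub, ← diagonal_smul, tridiag,
    add_comm, ← add_assoc]
  congr 3
  ext j
  simp only [Pi.smul_apply, Nat.add_sub_cancel, nsmul_eq_mul, Nat.cast_ofNat]

theorem hasDerivAt_tridiag_apply {𝕜 F : Type*} [NontriviallyNormedField 𝕜]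
    [NormedAddCommGroup F] [NormedSpace 𝕜 F] {d c : ℕ → 𝕜 → F} {d' c' : ℕ → F} {x : 𝕜}
    (hd : ∀ s, 1 ≤ s → s ≤ N → HasDerivAt (d s) (d' s) x)
    (hc : ∀ s, 1 ≤ s → s ≤ N - 1 → HasDerivAt (c s) (c' s) x) (j k : Fin N) :
    HasDerivAt (fun y => tridiag N (fun s => d s y) (fun s => c s y) j k)
      (tridiag N d' c' j k) x := by
  simp only [tridiag_apply]
  split_ifs
  · exact hd _ (by omega) (by omega)
  · exact hc _ (by omega) (by omega)
  · exact hc _ (by omega) (by omega)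
  · exact hasDerivAt_const x 0

end Toda

theorem stmt15_general (N : ℕ)
    (a b : ℕ → ℝ → ℂ)
    (ha0 : ∀ t, a 0 t = 0) (haN : ∀ t, a N t = 0)
    (L A : ℝ → Matrix (Fin N) (Fin N) ℂ)
    (hLdef : ∀ t (j k : Fin N), L t j k =
      if (j : ℕ) = (k : ℕ) then b ((j : ℕ) + 1) t
      else if (j : ℕ) + 1 = (k : ℕ) then a ((j : ℕ) + 1) t
      else if (k : ℕ) + 1 = (j : ℕ) then a ((k : ℕ) + 1) t
      else 0)
    (hAdef : ∀ t (j k : Fin N), A t j k =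
      if (j : ℕ) + 1 = (k : ℕ) then a ((j : ℕ) + 1) t
      else if (k : ℕ) + 1 = (j : ℕ) then -(a ((k : ℕ) + 1) t)
      else 0)
    (hToda_a : ∀ s : ℕ, 1 ≤ s → s ≤ N - 1 → ∀ t : ℝ,
      HasDerivAt (a s) (a s t * (b (s + 1) t - b s t)) t)
    (hToda_b : ∀ s : ℕ, 1 ≤ s → s ≤ N → ∀ t : ℝ,
      HasDerivAt (b s) (2 * ((a s t) ^ 2 - (a (s - 1) t) ^ 2)) t) :
    ∀ (t : ℝ) (j k : Fin N),
      HasDerivAt (fun τ => L τ j k) ((A t * L t - L t * A t) j k) t := by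
  intro t j k
  have hL : ∀ τ, L τ = Toda.tridiag N (fun s => b s τ) fun s => a s τ := fun τ => by
    ext j k
    rw [hLdef, Toda.tridiag_apply]
  have hA : A t = Toda.supDiag N (fun s => a s t) - (Toda.supDiag N fun s => a s t)ᵀ := by
    ext j k
    rw [hAdef, Toda.supDiag_sub_transpose_apply]
  rw [hA, hL, Toda.commutator_tridiag (ha0 t) (haN t)]
  simp_rw [hL]
  exact Toda.hasDerivAt_tridiag_apply (fun s h1 h2 => hToda_b s h1 h2 t)
    (fun s h1 h2 => hToda_a s h1 h2 t) j k

/-- if `a_s, b_s` solve the open Toda chain equations, then the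
tridiagonal Lax matrices `L, A` satisfy the Lax equation `dL/dt = [A, L]`
(entrywise). Indices of `a, b` are 1-based, with the convention `a₀ = a_N = 0`. -/
theorem stmt15 (N : ℕ) (hN : 2 ≤ N)
    (a b : ℕ → ℝ → ℂ)
    (ha0 : ∀ t, a 0 t = 0) (haN : ∀ t, a N t = 0)
    (L A : ℝ → Matrix (Fin N) (Fin N) ℂ)
    (hLdef : ∀ t (j k : Fin N), L t j k =
      if (j : ℕ) = (k : ℕ) then b ((j : ℕ) + 1) t
      else if (j : ℕ) + 1 = (k : ℕ) then a ((j : ℕ) + 1) t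
      else if (k : ℕ) + 1 = (j : ℕ) then a ((k : ℕ) + 1) t
      else 0)
    (hAdef : ∀ t (j k : Fin N), A t j k =
      if (j : ℕ) + 1 = (k : ℕ) then a ((j : ℕ) + 1) t
      else if (k : ℕ) + 1 = (j : ℕ) then -(a ((k : ℕ) + 1) t)
      else 0)
    (hToda_a : ∀ s : ℕ, 1 ≤ s → s ≤ N - 1 → ∀ t : ℝ,
      HasDerivAt (a s) (a s t * (b (s + 1) t - b s t)) t)
    (hToda_b : ∀ s : ℕ, 1 ≤ s → s ≤ N → ∀ t : ℝ,
      HasDerivAt (b s) (2 * ((a s t) ^ 2 - (a (s - 1) t) ^ 2)) t) :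
    ∀ (t : ℝ) (j k : Fin N),
      HasDerivAt (fun τ => L τ j k) ((A t * L t - L t * A t) j k) t :=
  stmt15_general N a b ha0 haN L A hLdef hAdef hToda_a hToda_b
end

section
/- The argument of the inner product ⟨n(θ₂, γ₂), n(θ₁, γ₁)⟩ satisfies tan(σ) = −tan(γ₂ − γ₁)·cos(θ₂ + θ₁)/cos(θ₂ − θ₁), where σ = arg⟨n(θ₂, γ₂), n(θ₁, γ₁)⟩, provided cos(θ₂ − θ₁) ≠ 0 and the real part cos(γ₂ − γ₁)cos(θ₂ − θ₁) of the inner product is positive. -/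
open Complex

theorem conj_mul_add_conj_mul_eq (θ₁ θ₂ γ₁ γ₂ : ℝ) :
    (starRingEnd ℂ) ((Real.cos θ₂ : ℂ) * exp (I * γ₂)) * ((Real.cos θ₁ : ℂ) * exp (I * γ₁))
        + (starRingEnd ℂ) ((Real.sin θ₂ : ℂ) * exp (-(I * γ₂)))
          * ((Real.sin θ₁ : ℂ) * exp (-(I * γ₁)))
      = ⟨Real.cos (γ₂ - γ₁) * Real.cos (θ₂ - θ₁),
          -(Real.sin (γ₂ - γ₁) * Real.cos (θ₂ + θ₁))⟩ := by
  apply Complex.ext <;>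
    simp only [ofReal_cos, ofReal_sin, map_mul, add_re, add_im, mul_re, mul_im, neg_re, neg_im,
      conj_re, conj_im, exp_re, exp_im, I_re, I_im, ofReal_re, ofReal_im, cos_ofReal_re,
      cos_ofReal_im, sin_ofReal_re, sin_ofReal_im, zero_mul, mul_zero, one_mul, sub_self,
      sub_zero, zero_add, add_zero, neg_zero, Real.exp_zero, Real.cos_neg, Real.sin_neg,
      Real.cos_sub, Real.sin_sub, Real.cos_add] <;>
    ring

theorem stmt18_general (θ₁ θ₂ γ₁ γ₂ : ℝ) :
    Real.tan (Complex.arg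
        ((starRingEnd ℂ) ((Real.cos θ₂ : ℂ) * Complex.exp (Complex.I * γ₂))
            * ((Real.cos θ₁ : ℂ) * Complex.exp (Complex.I * γ₁))
          + (starRingEnd ℂ) ((Real.sin θ₂ : ℂ) * Complex.exp (-(Complex.I * γ₂)))
            * ((Real.sin θ₁ : ℂ) * Complex.exp (-(Complex.I * γ₁)))))
      = -(Real.tan (γ₂ - γ₁) * Real.cos (θ₂ + θ₁) / Real.cos (θ₂ - θ₁)) := by
  -- If the real part vanishes, `x / 0 = 0` makes both sides `0`.
  rw [conj_mul_add_conj_mul_eq, tan_arg, Real.tan_eq_sin_div_cos]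
  ring

/-- with `σ` the principal argument of
`⟨n(θ₂,γ₂), n(θ₁,γ₁)⟩`, and assuming `cos(θ₂−θ₁) ≠ 0` and
`cos(γ₂−γ₁)cos(θ₂−θ₁) > 0`, one has
`tan σ = −tan(γ₂−γ₁)·cos(θ₂+θ₁)/cos(θ₂−θ₁)`. -/
theorem stmt18 (θ₁ θ₂ γ₁ γ₂ : ℝ)
    (hcos : Real.cos (θ₂ - θ₁) ≠ 0)
    (hre : 0 < Real.cos (γ₂ - γ₁) * Real.cos (θ₂ - θ₁)) :
    Real.tan (Complex.arg
        ((starRingEnd ℂ) ((Real.cos θ₂ : ℂ) * Complex.exp (Complex.I * γ₂))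
            * ((Real.cos θ₁ : ℂ) * Complex.exp (Complex.I * γ₁))
          + (starRingEnd ℂ) ((Real.sin θ₂ : ℂ) * Complex.exp (-(Complex.I * γ₂)))
            * ((Real.sin θ₁ : ℂ) * Complex.exp (-(Complex.I * γ₁)))))
      = -(Real.tan (γ₂ - γ₁) * Real.cos (θ₂ + θ₁) / Real.cos (θ₂ - θ₁)) :=
  stmt18_general θ₁ θ₂ γ₁ γ₂
end
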